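/- The union A = O(λ1) ∪ O(λ2) of the orbits of λ1 = [1,−1,0; 0,0,0; 0,0,0] and λ2 = [2,−1,−1; 2,−1,−1; 2,−1,−1] under the S3 ≀ S3 action equals the set of 36 projective lines of the E6 root system. -/
import Mathlib


/-- Vectors `(x; y; z) ∈ ℝ⁹` written as three blocks of three coordinates. -/
abbrev V9 : Type := Fin 3 → Fin 3 → ℝ

/-- The vector with blocks `a`, `b`, `c`. -/
def blk (a b c : Fin 3 → ℝ) : V9 := ![a, b, c]

/-- The standard inner product on `ℝ⁹`. -/
def dot9 (v w : V9) : ℝ := ∑ b, ∑ p, v b p * w b p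

/-- The projective line (ray) spanned by a vector. -/
def ray9 (v : V9) : Submodule ℝ V9 := Submodule.span ℝ {v}

/-- Orthogonality of subspaces of `ℝ⁹`. -/
def Perp9 (L M : Submodule ℝ V9) : Prop := ∀ x ∈ L, ∀ y ∈ M, dot9 x y = 0

/-- The three vectors `(1,−1,0)`, `(1,0,−1)`, `(0,1,−1)`. -/
def xis : Set (Fin 3 → ℝ) := {![1, -1, 0], ![1, 0, -1], ![0, 1, -1]}

/-- The three vectors `(2,−1,−1)`, `(−1,2,−1)`, `(−1,−1,2)`. -/
def etas : Set (Fin 3 → ℝ) := {![2, -1, -1], ![-1, 2, -1], ![-1, -1, 2]}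

/-- The 72 roots of `E6`, modeled in the subspace
`R = {(x;y;z) : Σxᵢ = Σyⱼ = Σzₖ = 0}` of `ℝ⁹`: the 9 vectors `(ξ;0;0)`, `(0;ξ;0)`,
`(0;0;ξ)` with `ξ ∈ xis`, the 27 vectors `(1/3)(ξ;η;ζ)` with `ξ,η,ζ ∈ etas`, and the
negatives of all of these. -/
def E6roots : Set V9 :=
  {v | ∃ w : V9, (v = w ∨ v = -w) ∧
    ((∃ ξ ∈ xis, w = blk ξ 0 0 ∨ w = blk 0 ξ 0 ∨ w = blk 0 0 ξ) ∨
     (∃ ξ ∈ etas, ∃ η ∈ etas, ∃ ζ ∈ etas, w = ((1 : ℝ) / 3) • blk ξ η ζ))}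

/-- The 36 projective lines of the `E6` configuration. -/
def E6lines : Set (Submodule ℝ V9) := ray9 '' E6roots

/-- The orbit of a projective line under the natural action of the wreath product
`S₃ ≀ S₃` on `ℝ⁹ = ℝ³ ⊕ ℝ³ ⊕ ℝ³` (permuting the entries within each block and
permuting the three blocks). -/
def wreathOrbit (v : V9) : Set (Submodule ℝ V9) :=
  {L | ∃ (π : Equiv.Perm (Fin 3)) (ρ : Fin 3 → Equiv.Perm (Fin 3)),
    L = ray9 fun b p => v (π b) (ρ b p)}

lemma ray9_smul (c : ℝ) (hc : c ≠ 0) (v : V9) : ray9 (c • v) = ray9 v := by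
  unfold ray9
  rw [Submodule.span_singleton_smul_eq (IsUnit.mk0 c hc) v]

lemma ray9_neg (v : V9) : ray9 (-v) = ray9 v := by
  have := ray9_smul (-1) (by norm_num) v
  simpa using this

lemma perm3 : ∀ σ : Equiv.Perm (Fin 3), σ = 1 ∨ σ = Equiv.swap 0 1 ∨ σ = Equiv.swap 0 2 ∨ σ = Equiv.swap 1 2 ∨ σ = Equiv.swap 0 1 * Equiv.swap 1 2 ∨ σ = Equiv.swap 0 2 * Equiv.swap 1 2 := by decide

lemma xi_perm_all (σ : Equiv.Perm (Fin 3)) :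
    ∃ ξ ∈ xis, (fun p => (![1,-1,0] : Fin 3 → ℝ) (σ p)) = ξ ∨
      (fun p => (![1,-1,0] : Fin 3 → ℝ) (σ p)) = -ξ := by
  rcases perm3 σ with rfl|rfl|rfl|rfl|rfl|rfl
  · exact ⟨![1,-1,0], by simp [xis], Or.inl (by funext p; fin_cases p <;> simp)⟩
  · exact ⟨![1,-1,0], by simp [xis], Or.inr (by funext p; fin_cases p <;> simp [Equiv.swap_apply_def] <;> norm_num)⟩
  · exact ⟨![0,1,-1], by simp [xis], Or.inr (by funext p; fin_cases p <;> simp [Equiv.swap_apply_def] <;> norm_num)⟩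
  · exact ⟨![1,0,-1], by simp [xis], Or.inl (by funext p; fin_cases p <;> simp [Equiv.swap_apply_def] <;> norm_num)⟩
  · exact ⟨![1,0,-1], by simp [xis], Or.inr (by funext p; fin_cases p <;> simp [Equiv.swap_apply_def] <;> norm_num)⟩
  · exact ⟨![0,1,-1], by simp [xis], Or.inl (by funext p; fin_cases p <;> simp [Equiv.swap_apply_def] <;> norm_num)⟩

lemma eta_perm_all (σ : Equiv.Perm (Fin 3)) :
    ∃ e ∈ etas, (fun p => (![2,-1,-1] : Fin 3 → ℝ) (σ p)) = e := by
  rcases perm3 σ with rfl|rfl|rfl|rfl|rfl|rfl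
  · exact ⟨![2,-1,-1], by simp [etas], by funext p; fin_cases p <;> simp⟩
  · exact ⟨![-1,2,-1], by simp [etas], by funext p; fin_cases p <;> simp [Equiv.swap_apply_def] <;> norm_num⟩
  · exact ⟨![-1,-1,2], by simp [etas], by funext p; fin_cases p <;> simp [Equiv.swap_apply_def] <;> norm_num⟩
  · exact ⟨![2,-1,-1], by simp [etas], by funext p; fin_cases p <;> simp [Equiv.swap_apply_def] <;> norm_num⟩
  · exact ⟨![-1,-1,2], by simp [etas], by funext p; fin_cases p <;> simp [Equiv.swap_apply_def] <;> norm_num⟩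
  · exact ⟨![-1,2,-1], by simp [etas], by funext p; fin_cases p <;> simp [Equiv.swap_apply_def] <;> norm_num⟩

lemma eta_perm {e : Fin 3 → ℝ} (he : e ∈ etas) :
    ∃ σ : Equiv.Perm (Fin 3), (fun p => (![2,-1,-1] : Fin 3 → ℝ) (σ p)) = e := by
  simp only [etas, Set.mem_insert_iff, Set.mem_singleton_iff] at he
  rcases he with rfl|rfl|rfl
  · exact ⟨1, by funext p; fin_cases p <;> simp⟩
  · exact ⟨Equiv.swap 0 1, by funext p; fin_cases p <;> simp [Equiv.swap_apply_def] <;> norm_num⟩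
  · exact ⟨Equiv.swap 0 2, by funext p; fin_cases p <;> simp [Equiv.swap_apply_def] <;> norm_num⟩

lemma fin3 : ∀ x : Fin 3, x = 0 ∨ x = 1 ∨ x = 2 := by decide

/-- vector with block `g` at position `b0`, zero elsewhere -/
def place (b0 : Fin 3) (g : Fin 3 → ℝ) : V9 := fun b => if b = b0 then g else 0

lemma place_neg (b0 : Fin 3) (g : Fin 3 → ℝ) : place b0 (-g) = -(place b0 g) := by
  funext b p; simp only [place, Pi.neg_apply]; split <;> simp

lemma place0 (g : Fin 3 → ℝ) : place 0 g = blk g 0 0 := by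
  funext b p; rcases fin3 b with rfl|rfl|rfl <;> simp [place, blk, Matrix.vecHead, Matrix.vecTail]
lemma place1 (g : Fin 3 → ℝ) : place 1 g = blk 0 g 0 := by
  funext b p; rcases fin3 b with rfl|rfl|rfl <;> simp [place, blk, Matrix.vecHead, Matrix.vecTail]
lemma place2 (g : Fin 3 → ℝ) : place 2 g = blk 0 0 g := by
  funext b p; rcases fin3 b with rfl|rfl|rfl <;> simp [place, blk, Matrix.vecHead, Matrix.vecTail]

lemma orbit1_root (π : Equiv.Perm (Fin 3)) (ρ : Fin 3 → Equiv.Perm (Fin 3)) :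
    (fun b p => blk ![1,-1,0] 0 0 (π b) (ρ b p)) ∈ E6roots := by
  obtain ⟨ξ, hξ, hc⟩ := xi_perm_all (ρ (π.symm 0))
  have hπ0 : π (π.symm 0) = 0 := π.apply_symm_apply 0
  have hv' : (fun b p => blk ![1,-1,0] 0 0 (π b) (ρ b p)) =
      place (π.symm 0) (fun p => (![1,-1,0] : Fin 3 → ℝ) (ρ (π.symm 0) p)) := by
    funext b p
    by_cases h : b = π.symm 0
    · subst h
      rw [hπ0]
      simp [place, blk, Matrix.vecHead, Matrix.vecTail]
    · have hne : π b ≠ 0 := fun hh => h (by rw [← hh, Equiv.symm_apply_apply])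
      have hz : blk ![1,-1,0] 0 0 (π b) = 0 := by
        rcases fin3 (π b) with hj|hj|hj
        · exact absurd hj hne
        · rw [hj]; simp [blk]
        · rw [hj]; simp [blk]
      rw [hz]
      simp [place, h]
  rcases fin3 (π.symm 0) with hb|hb|hb <;> rw [hb] at hv' hc
  · refine ⟨blk ξ 0 0, ?_, Or.inl ⟨ξ, hξ, Or.inl rfl⟩⟩
    rcases hc with hc|hc
    · exact Or.inl (by rw [hv', hc, place0])
    · exact Or.inr (by rw [hv', hc, ← neg_neg ξ, place_neg, place0, neg_neg])
  · refine ⟨blk 0 ξ 0, ?_, Or.inl ⟨ξ, hξ, Or.inr (Or.inl rfl)⟩⟩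
    rcases hc with hc|hc
    · exact Or.inl (by rw [hv', hc, place1])
    · exact Or.inr (by rw [hv', hc, ← neg_neg ξ, place_neg, place1, neg_neg])
  · refine ⟨blk 0 0 ξ, ?_, Or.inl ⟨ξ, hξ, Or.inr (Or.inr rfl)⟩⟩
    rcases hc with hc|hc
    · exact Or.inl (by rw [hv', hc, place2])
    · exact Or.inr (by rw [hv', hc, ← neg_neg ξ, place_neg, place2, neg_neg])

lemma orbit2_blk (π : Equiv.Perm (Fin 3)) (ρ : Fin 3 → Equiv.Perm (Fin 3)) :
    ∃ e0 ∈ etas, ∃ e1 ∈ etas, ∃ e2 ∈ etas,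
      (fun b p => blk ![2,-1,-1] ![2,-1,-1] ![2,-1,-1] (π b) (ρ b p)) = blk e0 e1 e2 := by
  obtain ⟨e0, he0, h0⟩ := eta_perm_all (ρ 0)
  obtain ⟨e1, he1, h1⟩ := eta_perm_all (ρ 1)
  obtain ⟨e2, he2, h2⟩ := eta_perm_all (ρ 2)
  refine ⟨e0, he0, e1, he1, e2, he2, ?_⟩
  have hE : ∀ j : Fin 3, blk ![2,-1,-1] ![2,-1,-1] ![2,-1,-1] j = ![2,-1,-1] := by
    intro j; rcases fin3 j with rfl|rfl|rfl <;> simp [blk]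
  funext b p
  rcases fin3 b with rfl|rfl|rfl
  · rw [hE]; simpa [blk, Matrix.vecHead, Matrix.vecTail] using congrFun h0 p
  · rw [hE]; simpa [blk, Matrix.vecHead, Matrix.vecTail] using congrFun h1 p
  · rw [hE]; simpa [blk, Matrix.vecHead, Matrix.vecTail] using congrFun h2 p

/-- the union of the `S₃ ≀ S₃`-orbits of
`λ₁ = [1,−1,0; 0,0,0; 0,0,0]` and `λ₂ = [2,−1,−1; 2,−1,−1; 2,−1,−1]` equals the set
of 36 projective lines of the `E6` root system. -/
theorem stmt_17 :
    wreathOrbit (blk ![1, -1, 0] 0 0) ∪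
      wreathOrbit (blk ![2, -1, -1] ![2, -1, -1] ![2, -1, -1]) = E6lines := by
  ext L
  constructor
  · rintro (⟨π, ρ, rfl⟩ | ⟨π, ρ, rfl⟩)
    · exact ⟨_, orbit1_root π ρ, rfl⟩
    · obtain ⟨e0, he0, e1, he1, e2, he2, hv⟩ := orbit2_blk π ρ
      refine ⟨((1:ℝ)/3) • blk e0 e1 e2,
        ⟨((1:ℝ)/3) • blk e0 e1 e2, Or.inl rfl, Or.inr ⟨e0, he0, e1, he1, e2, he2, rfl⟩⟩, ?_⟩
      rw [hv, ray9_smul ((1:ℝ)/3) (by norm_num)]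
  · rintro ⟨v, ⟨w, hvw, hw⟩, rfl⟩
    have hray : ray9 v = ray9 w := by
      rcases hvw with rfl|rfl
      · rfl
      · exact ray9_neg w
    rw [hray]
    rcases hw with ⟨ξ, hξ, hcase⟩ | ⟨ξ, hξ, η, hη, ζ, hζ, rfl⟩
    · left
      simp only [xis, Set.mem_insert_iff, Set.mem_singleton_iff] at hξ
      rcases hcase with rfl|rfl|rfl <;> rcases hξ with rfl|rfl|rfl
      · exact ⟨Equiv.refl _, fun _ => Equiv.refl _, by
          apply congrArg; funext b p; fin_cases b <;> fin_cases p <;>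
            simp [blk, Equiv.swap_apply_def, Matrix.vecHead, Matrix.vecTail] <;> norm_num⟩
      · exact ⟨Equiv.refl _, fun _ => Equiv.swap 1 2, by
          apply congrArg; funext b p; fin_cases b <;> fin_cases p <;>
            simp [blk, Equiv.swap_apply_def, Matrix.vecHead, Matrix.vecTail] <;> norm_num⟩
      · exact ⟨Equiv.refl _, fun _ => Equiv.swap 0 2 * Equiv.swap 1 2, by
          apply congrArg; funext b p; fin_cases b <;> fin_cases p <;>
            simp [blk, Equiv.swap_apply_def, Matrix.vecHead, Matrix.vecTail] <;> norm_num⟩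
      · exact ⟨Equiv.swap 0 1, fun _ => Equiv.refl _, by
          apply congrArg; funext b p; fin_cases b <;> fin_cases p <;>
            simp [blk, Equiv.swap_apply_def, Matrix.vecHead, Matrix.vecTail] <;> norm_num⟩
      · exact ⟨Equiv.swap 0 1, fun _ => Equiv.swap 1 2, by
          apply congrArg; funext b p; fin_cases b <;> fin_cases p <;>
            simp [blk, Equiv.swap_apply_def, Matrix.vecHead, Matrix.vecTail] <;> norm_num⟩
      · exact ⟨Equiv.swap 0 1, fun _ => Equiv.swap 0 2 * Equiv.swap 1 2, by
          apply congrArg; funext b p; fin_cases b <;> fin_cases p <;>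
            simp [blk, Equiv.swap_apply_def, Matrix.vecHead, Matrix.vecTail] <;> norm_num⟩
      · exact ⟨Equiv.swap 0 2, fun _ => Equiv.refl _, by
          apply congrArg; funext b p; fin_cases b <;> fin_cases p <;>
            simp [blk, Equiv.swap_apply_def, Matrix.vecHead, Matrix.vecTail] <;> norm_num⟩
      · exact ⟨Equiv.swap 0 2, fun _ => Equiv.swap 1 2, by
          apply congrArg; funext b p; fin_cases b <;> fin_cases p <;>
            simp [blk, Equiv.swap_apply_def, Matrix.vecHead, Matrix.vecTail] <;> norm_num⟩
      · exact ⟨Equiv.swap 0 2, fun _ => Equiv.swap 0 2 * Equiv.swap 1 2, by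
          apply congrArg; funext b p; fin_cases b <;> fin_cases p <;>
            simp [blk, Equiv.swap_apply_def, Matrix.vecHead, Matrix.vecTail] <;> norm_num⟩
    · right
      obtain ⟨σ0, h0⟩ := eta_perm hξ
      obtain ⟨σ1, h1⟩ := eta_perm hη
      obtain ⟨σ2, h2⟩ := eta_perm hζ
      refine ⟨Equiv.refl _, ![σ0, σ1, σ2], ?_⟩
      have heq : (fun b p => blk ![2,-1,-1] ![2,-1,-1] ![2,-1,-1] ((Equiv.refl (Fin 3)) b)
          ((![σ0, σ1, σ2]) b p)) = blk ξ η ζ := by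
        funext b p
        rcases fin3 b with rfl|rfl|rfl
        · simpa [blk, Matrix.vecHead, Matrix.vecTail] using congrFun h0 p
        · simpa [blk, Matrix.vecHead, Matrix.vecTail] using congrFun h1 p
        · simpa [blk, Matrix.vecHead, Matrix.vecTail] using congrFun h2 p
      rw [heq, ray9_smul ((1:ℝ)/3) (by norm_num)]
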